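/- arXiv:2301.02860 — 2 statements merged into one kernel-verified Lean document; each statement's English description precedes it below -/
import Mathlib

section
/- Let ρ : ℝ³ × ℝ → ℝ, v, F, n : ℝ³ × ℝ → ℝ³ be C¹ and let T_S be a C¹ 3×3-matrix-valued field on ℝ³ × ℝ. Suppose that at a point (x,t): D_t^S ρ + (div_Γ v) ρ = 0 and ρ D_t^S v = div_Γ T_S + F. Then at that point, D_t^N (ρ v) + div_Γ (ρ v ⊗ v − T_S) = F, where ρ v ⊗ v is the matrix with entries ρ v_i v_j. -/
noncomputable section

open scoped BigOperators
open Matrix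

/-- Points of `ℝ³`. -/
abbrev V3 : Type := Fin 3 → ℝ

/-- Points of space-time `ℝ³ × ℝ`. -/
abbrev Pt : Type := V3 × ℝ

/-- Euclidean dot product on `ℝ³`. -/
def dot (a b : V3) : ℝ := ∑ j, a j * b j

/-- Spatial partial derivative `∂_j f` (at fixed time). -/
def pd (f : Pt → ℝ) (j : Fin 3) (p : Pt) : ℝ := fderiv ℝ f p (Pi.single j 1, 0)

/-- Time derivative `∂_t f`. -/
def ptd (f : Pt → ℝ) (p : Pt) : ℝ := fderiv ℝ f p (0, 1)

/-- Spatial gradient `∇f`. -/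
def grad (f : Pt → ℝ) (p : Pt) : V3 := fun j => pd f j p

/-- Tangential derivative `∂^Γ_j f = ∂_j f − n_j (n·∇f)`. -/
def pdG (n : Pt → V3) (f : Pt → ℝ) (j : Fin 3) (p : Pt) : ℝ :=
  pd f j p - n p j * dot (n p) (grad f p)

/-- Surface gradient `∇_Γ f`. -/
def gradG (n : Pt → V3) (f : Pt → ℝ) (p : Pt) : V3 := fun j => pdG n f j p

/-- Surface divergence `div_Γ V = Σ_j ∂^Γ_j V_j` of a vector field. -/
def divG (n : Pt → V3) (V : Pt → V3) (p : Pt) : ℝ :=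
  ∑ j, pdG n (fun q => V q j) j p

/-- Row-wise surface divergence of a matrix field:
`(div_Γ M)_i = Σ_j ∂^Γ_j M_{ij}`. -/
def divGM (n : Pt → V3) (M : Pt → Matrix (Fin 3) (Fin 3) ℝ) (p : Pt) : V3 :=
  fun i => ∑ j, pdG n (fun q => M q i j) j p

/-- Material derivative `D_t^S f = ∂_t f + (v·∇)f`. -/
def DtS (v : Pt → V3) (f : Pt → ℝ) (p : Pt) : ℝ := ptd f p + dot (v p) (grad f p)

/-- Normal-time derivative `D_t^N f = ∂_t f + (v·n)(n·∇)f`. -/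
def DtN (v n : Pt → V3) (f : Pt → ℝ) (p : Pt) : ℝ :=
  ptd f p + dot (v p) (n p) * dot (n p) (grad f p)

lemma pd_mul' (f g : Pt → ℝ) (p : Pt) (hf : DifferentiableAt ℝ f p)
    (hg : DifferentiableAt ℝ g p) (j : Fin 3) :
    pd (fun q => f q * g q) j p = pd f j p * g p + f p * pd g j p := by
  simp only [pd]
  rw [fderiv_fun_mul hf hg]
  simp only [ContinuousLinearMap.add_apply, ContinuousLinearMap.smul_apply, smul_eq_mul]
  ring

lemma ptd_mul' (f g : Pt → ℝ) (p : Pt) (hf : DifferentiableAt ℝ f p)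
    (hg : DifferentiableAt ℝ g p) :
    ptd (fun q => f q * g q) p = ptd f p * g p + f p * ptd g p := by
  simp only [ptd]
  rw [fderiv_fun_mul hf hg]
  simp only [ContinuousLinearMap.add_apply, ContinuousLinearMap.smul_apply, smul_eq_mul]
  ring

lemma pd_sub' (f g : Pt → ℝ) (p : Pt) (hf : DifferentiableAt ℝ f p)
    (hg : DifferentiableAt ℝ g p) (j : Fin 3) :
    pd (fun q => f q - g q) j p = pd f j p - pd g j p := by
  simp only [pd]
  rw [fderiv_fun_sub hf hg]
  simp

/-- if at `p` the surface continuity equation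
`D_t^S ρ + (div_Γ v) ρ = 0` and the surface momentum equation
`ρ D_t^S v = div_Γ T_S + F` hold, then componentwise
`D_t^N (ρ v) + div_Γ (ρ v ⊗ v − T_S) = F` at `p`. -/
theorem conservative_momentum_form_surface
    (ρ : Pt → ℝ) (v F n : Pt → V3) (TS : Pt → Matrix (Fin 3) (Fin 3) ℝ)
    (hρ : ContDiff ℝ 1 ρ) (hv : ContDiff ℝ 1 v)
    (hF : ContDiff ℝ 1 F) (hn : ContDiff ℝ 1 n)
    (hTS : ∀ i j, ContDiff ℝ 1 (fun q => TS q i j))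
    (p : Pt)
    (hcont : DtS v ρ p + divG n v p * ρ p = 0)
    (hmom : ∀ i, ρ p * DtS v (fun q => v q i) p = divGM n TS p i + F p i) :
    ∀ i : Fin 3,
      DtN v n (fun q => ρ q * v q i) p
        + divGM n (fun q => (Matrix.of fun i' j' => ρ q * v q i' * v q j') - TS q) p i
        = F p i := by

  intro i
  have hρd : DifferentiableAt ℝ ρ p := (hρ.differentiable one_ne_zero).differentiableAt
  have hvd : ∀ k : Fin 3, DifferentiableAt ℝ (fun q => v q k) p := fun k =>
    differentiableAt_pi.mp ((hv.differentiable one_ne_zero).differentiableAt) k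
  have hTd : ∀ a b : Fin 3, DifferentiableAt ℝ (fun q => TS q a b) p := fun a b =>
    ((hTS a b).differentiable one_ne_zero).differentiableAt
  have hri : DifferentiableAt ℝ (fun q => ρ q * v q i) p := hρd.mul (hvd i)
  have E2 : ∀ j : Fin 3, pd (fun q => ρ q * v q i) j p
      = pd ρ j p * v p i + ρ p * pd (fun q => v q i) j p :=
    pd_mul' ρ (fun q => v q i) p hρd (hvd i)
  have E3 : ptd (fun q => ρ q * v q i) p
      = ptd ρ p * v p i + ρ p * ptd (fun q => v q i) p :=
    ptd_mul' ρ (fun q => v q i) p hρd (hvd i)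
  have E : ∀ (k j : Fin 3), pd (fun q => ρ q * v q i * v q k - TS q i k) j p
      = (pd ρ j p * v p i + ρ p * pd (fun q => v q i) j p) * v p k
        + ρ p * v p i * pd (fun q => v q k) j p - pd (fun q => TS q i k) j p := by
    intro k j
    have h1 := pd_sub' (fun q => ρ q * v q i * v q k) (fun q => TS q i k) p
      (hri.mul (hvd k)) (hTd i k) j
    have h2 := pd_mul' (fun q => ρ q * v q i) (fun q => v q k) p hri (hvd k) j
    simp only [h1, h2, E2]
  have hm := hmom i
  simp only [DtN, DtS, divG, divGM, pdG, dot, grad, gradG, Matrix.sub_apply,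
    Matrix.of_apply, Fin.sum_univ_three] at hcont hm ⊢
  simp only [E, E2, E3]
  linear_combination hm + v p i * hcont
end
end

section
/- Let ρ, e, θ, π, ς, μ, λ : ℝ³ × ℝ → ℝ and v : ℝ³ × ℝ → ℝ³ and n : ℝ³ × ℝ → ℝ³ with |n| = 1 everywhere be C¹, with ρ > 0 everywhere. Set F^H = e − θ ς, T_S = μ D_Γ(v) + λ (div_Γ v) P − π P, and e_{D_S} = μ |D_Γ(v)|² + λ (div_Γ v)². Suppose that at a point (x,t): D_t^S ρ + (div_Γ v) ρ = 0 and D_t^S e = θ D_t^S ς − π D_t^S (1/ρ). Then at that point, ρ D_t^S F^H + ρ ς D_t^S θ − T_S : D_Γ(v) = − e_{D_S}. -/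
noncomputable section

open scoped BigOperators
open Matrix

/-- Orthogonal projection `P = I − n⊗n` as a matrix. -/
def Pmat (n : Pt → V3) (p : Pt) : Matrix (Fin 3) (Fin 3) ℝ :=
  Matrix.of fun i j => (if i = j then (1 : ℝ) else 0) - n p i * n p j

/-- Surface gradient matrix `[∇_Γ v]_{ij} = ∂^Γ_j v_i`. -/
def gradGM (n v : Pt → V3) (p : Pt) : Matrix (Fin 3) (Fin 3) ℝ :=
  Matrix.of fun i j => pdG n (fun q => v q i) j p

/-- Surface strain tensor `D_Γ(v) = (P ∇_Γ v + (P ∇_Γ v)ᵀ)/2`. -/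
def DGam (n v : Pt → V3) (p : Pt) : Matrix (Fin 3) (Fin 3) ℝ :=
  (2 : ℝ)⁻¹ • (Pmat n p * gradGM n v p + (Pmat n p * gradGM n v p)ᵀ)

/-- Frobenius inner product. -/
def frob (A B : Matrix (Fin 3) (Fin 3) ℝ) : ℝ := ∑ i, ∑ j, A i j * B i j

/-- Surface stress tensor `T_S = μ D_Γ(v) + λ (div_Γ v) P − π P`. -/
def TS (n v : Pt → V3) (mu lam pres : Pt → ℝ) (p : Pt) : Matrix (Fin 3) (Fin 3) ℝ :=
  mu p • DGam n v p + (lam p * divG n v p) • Pmat n p - pres p • Pmat n p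


/-- Auxiliary: the material derivative as a directional derivative. -/
lemma DtS_eq_fderiv (v : Pt → V3) (f : Pt → ℝ) (p : Pt) :
    DtS v f p = fderiv ℝ f p (v p, 1) := by
  have h : ((v p, (1:ℝ)) : V3 × ℝ)
      = (0, 1) + ∑ j, v p j • ((Pi.single j 1 : V3), (0:ℝ)) := by
    refine Prod.ext ?_ ?_
    · simp only [Prod.fst_add, Prod.fst_sum, Prod.smul_fst, zero_add]
      funext k
      simp [Finset.sum_apply, Pi.single_apply]
    · simp [Prod.snd_sum]
  rw [h, map_add, map_sum]
  simp only [_root_.map_smul, smul_eq_mul]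
  rfl

lemma DtS_sub (v : Pt → V3) (f g : Pt → ℝ) (p : Pt)
    (hf : DifferentiableAt ℝ f p) (hg : DifferentiableAt ℝ g p) :
    DtS v (fun q => f q - g q) p = DtS v f p - DtS v g p := by
  simp only [DtS_eq_fderiv]
  rw [fderiv_fun_sub hf hg]
  rfl

lemma DtS_mul (v : Pt → V3) (f g : Pt → ℝ) (p : Pt)
    (hf : DifferentiableAt ℝ f p) (hg : DifferentiableAt ℝ g p) :
    DtS v (fun q => f q * g q) p = f p * DtS v g p + g p * DtS v f p := by
  simp only [DtS_eq_fderiv]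
  rw [fderiv_fun_mul hf hg]
  simp

lemma DtS_inv (v : Pt → V3) (f : Pt → ℝ) (p : Pt)
    (hf : DifferentiableAt ℝ f p) (hne : f p ≠ 0) :
    DtS v (fun q => (f q)⁻¹) p = -(f p ^ 2)⁻¹ * DtS v f p := by
  have h := ((hasFDerivAt_inv hne).comp p hf.hasFDerivAt).fderiv
  simp only [DtS_eq_fderiv]
  rw [show (fun q => (f q)⁻¹) = (fun x : ℝ => x⁻¹) ∘ f from rfl, h]
  simp [mul_comm]

lemma tang_cancel (n : Pt → V3) (f : Pt → ℝ) (p : Pt)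
    (hunit : dot (n p) (n p) = 1) :
    ∑ j, n p j * pdG n f j p = 0 := by
  have hc : (∑ j, n p j * pd f j p) = dot (n p) (grad f p) := rfl
  simp only [pdG, mul_sub]
  rw [Finset.sum_sub_distrib, hc]
  have h2 : ∑ j, n p j * (n p j * dot (n p) (grad f p))
      = dot (n p) (n p) * dot (n p) (grad f p) := by
    simp [dot, Finset.sum_mul, mul_assoc]
  rw [h2, hunit, one_mul, sub_self]

lemma frob_P_DGam (n v : Pt → V3) (p : Pt) (hunit : dot (n p) (n p) = 1) :
    frob (Pmat n p) (DGam n v p) = divG n v p := by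
  have hg : ∀ i, ∑ j, n p j * gradGM n v p i j = 0 := fun i =>
    tang_cancel n (fun q => v q i) p hunit
  have hdiv : divG n v p = ∑ i, gradGM n v p i i := rfl
  rw [hdiv]
  have h0 := hg 0
  have h1 := hg 1
  have h2 := hg 2
  simp only [Fin.sum_univ_three] at h0 h1 h2 ⊢
  simp only [frob, DGam, Pmat, Matrix.smul_apply, Matrix.add_apply,
    Matrix.transpose_apply, Matrix.mul_apply, Matrix.of_apply, smul_eq_mul,
    Fin.sum_univ_three]
  simp only [Fin.reduceEq, reduceIte]
  linear_combination
    ((n p 0 * n p 0 + n p 1 * n p 1 + n p 2 * n p 2) - 2) * n p 0 * h0 +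
    ((n p 0 * n p 0 + n p 1 * n p 1 + n p 2 * n p 2) - 2) * n p 1 * h1 +
    ((n p 0 * n p 0 + n p 1 * n p 1 + n p 2 * n p 2) - 2) * n p 2 * h2

lemma frob_TS (n v : Pt → V3) (mu lam pres : Pt → ℝ) (p : Pt) :
    frob (TS n v mu lam pres p) (DGam n v p)
      = mu p * frob (DGam n v p) (DGam n v p)
        + (lam p * divG n v p - pres p) * frob (Pmat n p) (DGam n v p) := by
  simp only [TS, frob, Matrix.sub_apply, Matrix.add_apply, Matrix.smul_apply,
    smul_eq_mul, Fin.sum_univ_three]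
  ring

/-- with `F^H = e − θ ς`, `T_S = μ D_Γ(v) + λ (div_Γ v) P − π P`,
and `e_{D_S} = μ|D_Γ(v)|² + λ(div_Γ v)²`, if at `p` the surface continuity
equation and the thermodynamic identity hold (with `ρ > 0`, `|n| = 1`), then
`ρ D_t^S F^H + ρ ς D_t^S θ − T_S : D_Γ(v) = −e_{D_S}` at `p`. -/
theorem surface_helmholtz_stress_identity
    (ρ e θ pres ς mu lam : Pt → ℝ) (v n : Pt → V3)
    (hρ : ContDiff ℝ 1 ρ) (he : ContDiff ℝ 1 e) (hθ : ContDiff ℝ 1 θ)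
    (hpres : ContDiff ℝ 1 pres) (hς : ContDiff ℝ 1 ς)
    (hmu : ContDiff ℝ 1 mu) (hlam : ContDiff ℝ 1 lam)
    (hv : ContDiff ℝ 1 v) (hn : ContDiff ℝ 1 n)
    (hρpos : ∀ q, 0 < ρ q) (hunit : ∀ q, dot (n q) (n q) = 1)
    (p : Pt)
    (hcont : DtS v ρ p + divG n v p * ρ p = 0)
    (hthermo : DtS v e p = θ p * DtS v ς p - pres p * DtS v (fun q => (ρ q)⁻¹) p) :
    ρ p * DtS v (fun q => e q - θ q * ς q) p + ρ p * ς p * DtS v θ p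
      - frob (TS n v mu lam pres p) (DGam n v p)
      = -(mu p * frob (DGam n v p) (DGam n v p) + lam p * (divG n v p) ^ 2) := by
  have dρ := hρ.differentiable one_ne_zero p
  have de := he.differentiable one_ne_zero p
  have dθ := hθ.differentiable one_ne_zero p
  have dς := hς.differentiable one_ne_zero p
  have hρne : ρ p ≠ 0 := ne_of_gt (hρpos p)
  have hsub : DtS v (fun q => e q - θ q * ς q) p
      = DtS v e p - (θ p * DtS v ς p + ς p * DtS v θ p) := by
    rw [DtS_sub v e (fun q => θ q * ς q) p de (dθ.mul dς),
      DtS_mul v θ ς p dθ dς]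
  have hinv : DtS v (fun q => (ρ q)⁻¹) p = -(ρ p ^ 2)⁻¹ * DtS v ρ p :=
    DtS_inv v ρ p dρ hρne
  have hPD := frob_P_DGam n v p (hunit p)
  have hTS := frob_TS n v mu lam pres p
  have hDρ : DtS v ρ p = -(divG n v p * ρ p) := by linarith
  rw [hsub, hthermo, hinv, hDρ, hTS, hPD]
  field_simp
  ring
end
end
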